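/- Let $X = \Theta^\star + G$ with $\mathrm{rank}(\Theta^\star) \leq k$, let $X_k$ be a best rank-$k$ approximation of $X$ in operator norm, and let $\hat{\Theta}$ be any rank-$\leq k$ matrix minimizing $\|\hat{\Theta} - X_k\|_F$ over matrices with at most $k$ distinct columns (so in particular $\|\hat{\Theta} - X_k\|_F \leq \|\Theta^\star - X_k\|_F$, assuming $\Theta^\star$ has at most $k$ distinct columns). Then $\|\hat{\Theta} - \Theta^\star\|_F \leq \sqrt{32k}\,\|G\|_{\mathrm{op}}$. -/

import Mathlib

open Matrix

/-- Frobenius norm of a real matrix. -/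
noncomputable def frobNorm {d n : ℕ} (A : Matrix (Fin d) (Fin n) ℝ) : ℝ :=
  Real.sqrt (∑ i, ∑ j, (A i j) ^ 2)

/-- Operator (spectral) norm of a real matrix. -/
noncomputable def opNorm {d n : ℕ} (A : Matrix (Fin d) (Fin n) ℝ) : ℝ :=
  ‖LinearMap.toContinuousLinearMap (Matrix.toEuclideanLin A)‖

namespace Stmt5Aux

variable {d n : ℕ}

lemma frobNorm_eq (A : Matrix (Fin d) (Fin n) ℝ) :
    frobNorm A = ‖(WithLp.equiv 2 (Fin d × Fin n → ℝ)).symm (fun p => A p.1 p.2)‖ := by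
  rw [frobNorm, EuclideanSpace.norm_eq]
  congr 1
  rw [Fintype.sum_prod_type]
  simp [Real.norm_eq_abs, sq_abs]

lemma frobNorm_nonneg (A : Matrix (Fin d) (Fin n) ℝ) : 0 ≤ frobNorm A :=
  Real.sqrt_nonneg _

lemma frobNorm_add_le (A B : Matrix (Fin d) (Fin n) ℝ) :
    frobNorm (A + B) ≤ frobNorm A + frobNorm B := by
  rw [frobNorm_eq, frobNorm_eq, frobNorm_eq]
  have : ((WithLp.equiv 2 (Fin d × Fin n → ℝ)).symm (fun p => (A + B) p.1 p.2) :
      EuclideanSpace ℝ (Fin d × Fin n)) =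
      (WithLp.equiv 2 (Fin d × Fin n → ℝ)).symm (fun p => A p.1 p.2) +
      (WithLp.equiv 2 (Fin d × Fin n → ℝ)).symm (fun p => B p.1 p.2) := by
    ext p; simp [Matrix.add_apply]
  rw [this]
  exact norm_add_le _ _

lemma frobNorm_neg (A : Matrix (Fin d) (Fin n) ℝ) : frobNorm (-A) = frobNorm A := by
  simp [frobNorm, Matrix.neg_apply]

lemma frobNorm_sub_comm (A B : Matrix (Fin d) (Fin n) ℝ) :
    frobNorm (A - B) = frobNorm (B - A) := by
  rw [← frobNorm_neg, neg_sub]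

lemma opNorm_nonneg (A : Matrix (Fin d) (Fin n) ℝ) : 0 ≤ opNorm A := norm_nonneg _

lemma opNorm_add_le (A B : Matrix (Fin d) (Fin n) ℝ) :
    opNorm (A + B) ≤ opNorm A + opNorm B := by
  unfold opNorm
  rw [map_add, map_add]
  exact norm_add_le _ _

lemma opNorm_neg (A : Matrix (Fin d) (Fin n) ℝ) : opNorm (-A) = opNorm A := by
  unfold opNorm
  rw [map_neg, map_neg, norm_neg]

lemma opNorm_sub_comm (A B : Matrix (Fin d) (Fin n) ℝ) :
    opNorm (A - B) = opNorm (B - A) := by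
  rw [← opNorm_neg, neg_sub]

lemma rank_sub_le (A B : Matrix (Fin d) (Fin n) ℝ) :
    (A - B).rank ≤ A.rank + B.rank := by
  have h : LinearMap.range (A - B).mulVecLin ≤
      LinearMap.range A.mulVecLin ⊔ LinearMap.range B.mulVecLin := by
    rintro x ⟨v, rfl⟩
    have : (A - B).mulVecLin v = A.mulVecLin v - B.mulVecLin v := by
      simp [Matrix.mulVecLin_apply, Matrix.sub_mulVec]
    rw [this]
    exact Submodule.sub_mem _ (Submodule.mem_sup_left ⟨v, rfl⟩)
      (Submodule.mem_sup_right ⟨v, rfl⟩)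
  calc (A - B).rank ≤ Module.finrank ℝ
        (LinearMap.range A.mulVecLin ⊔ LinearMap.range B.mulVecLin : Submodule ℝ (Fin d → ℝ)) :=
        Submodule.finrank_mono h
    _ ≤ A.rank + B.rank := (Submodule.finrank_add_le_finrank_add_finrank _ _)

lemma frobNorm_sq_eq_trace (A : Matrix (Fin d) (Fin n) ℝ) :
    frobNorm A ^ 2 = (Aᵀ * A).trace := by
  have h0 : (0:ℝ) ≤ ∑ i, ∑ j, (A i j) ^ 2 :=
    Finset.sum_nonneg fun i _ => Finset.sum_nonneg fun j _ => sq_nonneg _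
  rw [frobNorm, Real.sq_sqrt h0, Matrix.trace]
  rw [Finset.sum_comm]
  refine Finset.sum_congr rfl fun j _ => ?_
  simp [Matrix.diag, Matrix.mul_apply, pow_two]

lemma trace_eq_sum_eigenvalues (A : Matrix (Fin d) (Fin n) ℝ)
    (hS : (Aᵀ * A).IsHermitian) :
    (Aᵀ * A).trace = ∑ j, hS.eigenvalues j := by
  conv_lhs => rw [hS.spectral_theorem]
  rw [Unitary.conjStarAlgAut_apply]
  rw [Matrix.trace_mul_cycle]
  rw [(Matrix.mem_unitaryGroup_iff').mp (Matrix.IsHermitian.eigenvectorUnitary hS).2, one_mul]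
  simp [Matrix.trace_diagonal]

lemma eigenvalue_eq_sq_norm (A : Matrix (Fin d) (Fin n) ℝ)
    (hS : (Aᵀ * A).IsHermitian) (j : Fin n) :
    hS.eigenvalues j =
      ‖LinearMap.toContinuousLinearMap (Matrix.toEuclideanLin A) (hS.eigenvectorBasis j)‖ ^ 2 := by
  set v : EuclideanSpace ℝ (Fin n) := hS.eigenvectorBasis j with hv
  have hv1 : ‖v‖ = 1 := hS.eigenvectorBasis.orthonormal.1 j
  have heig : (Aᵀ * A) *ᵥ ⇑v = hS.eigenvalues j • ⇑v := hS.mulVec_eigenvectorBasis j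
  have hvv : (⇑v) ⬝ᵥ (⇑v) = 1 := by
    have : ‖v‖ ^ 2 = 1 := by rw [hv1]; norm_num
    rw [EuclideanSpace.norm_eq] at this
    rw [Real.sq_sqrt (Finset.sum_nonneg fun i _ => sq_nonneg _)] at this
    simpa [dotProduct, Real.norm_eq_abs, sq_abs, ← pow_two] using this
  have hnorm : ‖LinearMap.toContinuousLinearMap (Matrix.toEuclideanLin A) v‖ ^ 2
      = (A *ᵥ ⇑v) ⬝ᵥ (A *ᵥ ⇑v) := by
    rw [LinearMap.coe_toContinuousLinearMap', Matrix.toEuclideanLin_apply,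
      EuclideanSpace.norm_eq, Real.sq_sqrt (Finset.sum_nonneg fun i _ => sq_nonneg _)]
    simp [dotProduct, Real.norm_eq_abs, sq_abs, ← pow_two]
  rw [hnorm]
  calc (hS.eigenvalues j)
      = hS.eigenvalues j * ((⇑v) ⬝ᵥ (⇑v)) := by rw [hvv, mul_one]
    _ = (⇑v) ⬝ᵥ (hS.eigenvalues j • ⇑v) := by rw [dotProduct_smul, smul_eq_mul]
    _ = (⇑v) ⬝ᵥ ((Aᵀ * A) *ᵥ ⇑v) := by rw [heig]
    _ = (⇑v) ⬝ᵥ (Aᵀ *ᵥ (A *ᵥ ⇑v)) := by rw [Matrix.mulVec_mulVec]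
    _ = (A *ᵥ ⇑v) ⬝ᵥ (A *ᵥ ⇑v) := by
        rw [Matrix.dotProduct_mulVec, Matrix.vecMul_transpose]

lemma frobNorm_le_sqrt_rank_mul_opNorm (A : Matrix (Fin d) (Fin n) ℝ) :
    frobNorm A ≤ Real.sqrt A.rank * opNorm A := by
  have hS : (Aᵀ * A).IsHermitian := by
    have := Matrix.isHermitian_conjTranspose_mul_self A
    rwa [Matrix.conjTranspose_eq_transpose_of_trivial] at this
  -- each eigenvalue is nonneg and ≤ opNorm A ^ 2
  have hle : ∀ j, hS.eigenvalues j ≤ opNorm A ^ 2 := by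
    intro j
    rw [eigenvalue_eq_sq_norm A hS j]
    have h1 : ‖LinearMap.toContinuousLinearMap (Matrix.toEuclideanLin A)
        (hS.eigenvectorBasis j)‖ ≤ opNorm A * ‖(hS.eigenvectorBasis j : EuclideanSpace ℝ (Fin n))‖ :=
      ContinuousLinearMap.le_opNorm _ _
    rw [hS.eigenvectorBasis.orthonormal.1 j, mul_one] at h1
    exact pow_le_pow_left₀ (norm_nonneg _) h1 2
  -- sum of eigenvalues bounded by rank * opNorm^2
  have hcard : (Finset.univ.filter (fun j => hS.eigenvalues j ≠ 0)).card = A.rank := by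
    rw [← Matrix.rank_transpose_mul_self A, hS.rank_eq_card_non_zero_eigs,
      Fintype.card_subtype]
  have hsum : ∑ j, hS.eigenvalues j ≤ (A.rank : ℝ) * opNorm A ^ 2 := by
    rw [← Finset.sum_filter_ne_zero]
    calc ∑ j ∈ Finset.univ.filter (fun j => hS.eigenvalues j ≠ 0), hS.eigenvalues j
        ≤ (Finset.univ.filter (fun j => hS.eigenvalues j ≠ 0)).card • (opNorm A ^ 2) :=
          Finset.sum_le_card_nsmul _ _ _ (fun j _ => hle j)
      _ = (A.rank : ℝ) * opNorm A ^ 2 := by rw [hcard, nsmul_eq_mul]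
  have hfrob2 : frobNorm A ^ 2 ≤ (A.rank : ℝ) * opNorm A ^ 2 := by
    rw [frobNorm_sq_eq_trace, trace_eq_sum_eigenvalues A hS]; exact hsum
  have := Real.sqrt_le_sqrt hfrob2
  rwa [Real.sqrt_sq (frobNorm_nonneg A), Real.sqrt_mul (Nat.cast_nonneg _),
    Real.sqrt_sq (opNorm_nonneg A)] at this

end Stmt5Aux

open Stmt5Aux

theorem stmt5 {d n k : ℕ}
    (Θstar G Xk Θhat : Matrix (Fin d) (Fin n) ℝ)
    (X : Matrix (Fin d) (Fin n) ℝ) (hX : X = Θstar + G)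
    (hΘrank : Θstar.rank ≤ k)
    (hXkrank : Xk.rank ≤ k)
    (hbest : ∀ B : Matrix (Fin d) (Fin n) ℝ, B.rank ≤ k →
      opNorm (X - Xk) ≤ opNorm (X - B))
    (hΘhatrank : Θhat.rank ≤ k)
    (hopt : frobNorm (Θhat - Xk) ≤ frobNorm (Θstar - Xk)) :
    frobNorm (Θhat - Θstar) ≤ Real.sqrt (32 * k) * opNorm G := by
  have hG : opNorm G ≥ 0 := opNorm_nonneg G
  -- operator norm bound: opNorm (Xk - Θstar) ≤ 2 * opNorm G
  have hXG : X - Θstar = G := by rw [hX]; abel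
  have h1 : opNorm (X - Xk) ≤ opNorm G := by
    have := hbest Θstar hΘrank
    rwa [hXG] at this
  have hop : opNorm (Xk - Θstar) ≤ 2 * opNorm G := by
    have heq : Xk - Θstar = -(X - Xk) + (X - Θstar) := by abel
    calc opNorm (Xk - Θstar) = opNorm (-(X - Xk) + (X - Θstar)) := by rw [← heq]
      _ ≤ opNorm (-(X - Xk)) + opNorm (X - Θstar) := opNorm_add_le _ _
      _ = opNorm (X - Xk) + opNorm G := by
          rw [opNorm_neg, hXG]
      _ ≤ opNorm G + opNorm G := by linarith
      _ = 2 * opNorm G := by ring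
  -- rank bound
  have hrank : ((Xk - Θstar).rank : ℝ) ≤ 2 * k := by
    have := rank_sub_le Xk Θstar
    have h2 : (Xk - Θstar).rank ≤ 2 * k := by omega
    exact_mod_cast h2
  -- Frobenius bound on Xk - Θstar
  have hfrob : frobNorm (Xk - Θstar) ≤ Real.sqrt (2 * k) * (2 * opNorm G) := by
    calc frobNorm (Xk - Θstar) ≤ Real.sqrt ((Xk - Θstar).rank) * opNorm (Xk - Θstar) :=
          frobNorm_le_sqrt_rank_mul_opNorm _
      _ ≤ Real.sqrt (2 * k) * (2 * opNorm G) := by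
          apply mul_le_mul (Real.sqrt_le_sqrt hrank) hop (opNorm_nonneg _) (Real.sqrt_nonneg _)
  -- assemble
  have htri : frobNorm (Θhat - Θstar) ≤ frobNorm (Θhat - Xk) + frobNorm (Xk - Θstar) := by
    have heq : Θhat - Θstar = (Θhat - Xk) + (Xk - Θstar) := by abel
    rw [heq]; exact frobNorm_add_le _ _
  have hsym : frobNorm (Θstar - Xk) = frobNorm (Xk - Θstar) := frobNorm_sub_comm _ _
  have hmain : frobNorm (Θhat - Θstar) ≤ 2 * (Real.sqrt (2 * k) * (2 * opNorm G)) := by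
    rw [hsym] at hopt
    linarith
  have hsqrt : Real.sqrt (32 * k) = 4 * Real.sqrt (2 * k) := by
    rw [show (32 : ℝ) * k = 16 * (2 * k) by ring, Real.sqrt_mul (by norm_num),
      show (16:ℝ) = 4 ^ 2 by norm_num, Real.sqrt_sq (by norm_num)]
  rw [hsqrt]
  linarith
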